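/- Let D be a strongly connected balanced bipartite digraph of order 2a ≥ 8 with partite sets X and Y. If D is not a directed cycle and max{d(x), d(y)} ≥ 2a − 2 for every dominating pair of vertices {x, y}, then D contains a non-hamiltonian directed cycle of length at least 4. -/

import Mathlib

/-!
If `D` has no dominating pair, every in-degree is `1`, and strong connectivity makes `D` a
directed cycle. Otherwise the degree condition gives a vertex of degree at least `2a - 2`, and we
find a 4-cycle. Two such big vertices on one side have enough common neighbours to span one.
Otherwise a big `u ∈ X` has a big in-neighbour `y ∈ Y` and, these being the only big vertices, all
in-degrees are at most `2`, so that `u → Y` and `y → X`. In both cases the 4-cycle is closed by an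
arc which strong connectivity forces out of a suitable set of vertices.
-/

open Finset

variable {V : Type*}

/-- Total degree (out-degree plus in-degree) of `x` in the digraph with arc relation `A`. -/
noncomputable def deg (A : V → V → Prop) (x : V) : ℕ :=
  Set.ncard {y | A x y} + Set.ncard {y | A y x}

/-- The digraph with arc relation `A` is strongly connected. -/
def StrongConn (A : V → V → Prop) : Prop :=
  ∀ u v : V, Relation.ReflTransGen A u v

/-- `{x, y}` is a dominating pair: distinct vertices with a common out-neighbour. -/
def DomPair (A : V → V → Prop) (x y : V) : Prop :=
  x ≠ y ∧ ∃ z, A x z ∧ A y z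

/-- `X, Y` is a bipartition of the digraph `A`: the two parts partition the vertex
set and every arc joins the two parts. -/
def IsBipartition (A : V → V → Prop) (X Y : Set V) : Prop :=
  Disjoint X Y ∧ X ∪ Y = Set.univ ∧
    ∀ u v, A u v → (u ∈ X ∧ v ∈ Y) ∨ (u ∈ Y ∧ v ∈ X)

/-- The digraph `A` has a directed cycle of length `m`. -/
def HasCycleLen (A : V → V → Prop) (m : ℕ) : Prop :=
  ∃ f : ZMod m → V, Function.Injective f ∧ ∀ i, A (f i) (f (i + 1))

/-- The digraph `A` is (isomorphic to) the directed cycle on its vertex set. -/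
def IsDirectedCycleDigraph [Fintype V] (A : V → V → Prop) : Prop :=
  ∃ e : V ≃ ZMod (Fintype.card V), ∀ u v, A u v ↔ e v = e u + 1

namespace StrongConn

variable {A : V → V → Prop}

lemma exists_adj_to [Nontrivial V] (hs : StrongConn A) (v : V) : ∃ u, A u v := by
  obtain ⟨w, hw⟩ := exists_ne v
  rcases (hs w v).cases_tail with rfl | ⟨u, -, huv⟩
  · exact absurd rfl hw
  · exact ⟨u, huv⟩

lemma exists_adj_from [Nontrivial V] (hs : StrongConn A) (v : V) : ∃ w, A v w := by
  obtain ⟨u, hu⟩ := exists_ne v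
  rcases (hs v u).cases_head with rfl | ⟨w, hvw, -⟩
  · exact absurd rfl hu
  · exact ⟨w, hvw⟩

lemma exists_adj_mem_notMem (hs : StrongConn A) {S : Set V} {u w : V} (hu : u ∈ S)
    (hw : w ∉ S) : ∃ v t, v ∈ S ∧ t ∉ S ∧ A v t := by
  by_contra! hclosed
  have hreach : ∀ t, Relation.ReflTransGen A u t → t ∈ S := by
    intro t ht
    induction ht with
    | refl => exact hu
    | tail _ hbc ih => exact by_contra fun hc => hclosed _ _ ih hc hbc
  exact hw (hreach w (hs u w))

end StrongConn

open MulAction Subgroup in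
lemma isDirectedCycleDigraph_of_perm [Fintype V] {A : V → V → Prop} (σ : Equiv.Perm V)
    (hA : ∀ u v, A u v ↔ σ u = v) (hs : StrongConn A) (v₀ : V) :
    IsDirectedCycleDigraph A := by
  have horbit : ∀ v, v ∈ orbit (zpowers σ) v₀ := by
    intro v
    induction hs v₀ v with
    | refl => exact mem_orbit_self v₀
    | tail _ hvw ih =>
      rw [← (hA _ _).mp hvw]
      exact mem_orbit_of_mem_orbit ⟨σ, mem_zpowers σ⟩ ih
  let e : V ≃ ZMod (Function.minimalPeriod (σ • ·) v₀) :=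
    (Equiv.subtypeUnivEquiv horbit).symm.trans (orbitZPowersEquiv σ v₀)
  have he : ∀ k : ℤ, e.symm (k + 1) = σ (e.symm k) := by
    intro k
    have h1 := congrArg Subtype.val (orbitZPowersEquiv_symm_apply' σ v₀ (k + 1))
    have h2 := congrArg Subtype.val (orbitZPowersEquiv_symm_apply' σ v₀ k)
    push_cast at h1
    simp only [e, Equiv.symm_trans_apply, Equiv.symm_symm, Equiv.subtypeUnivEquiv_apply, h1, h2]
    rw [add_comm k 1, zpow_add, zpow_one, mul_smul]
    rfl
  have hcard : Function.minimalPeriod (σ • ·) v₀ = Fintype.card V := by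
    rw [Fintype.card_congr e, ZMod.card]
  unfold IsDirectedCycleDigraph
  rw [← hcard]
  refine ⟨e, fun u v => ?_⟩
  rw [hA, ← e.eq_symm_apply, ← ZMod.intCast_zmod_cast (e u), he,
    ZMod.intCast_zmod_cast, Equiv.symm_apply_apply, eq_comm]

/-- Choosing the in-neighbour of each vertex gives a surjection, hence a permutation, whose inverse
is the successor map. -/
lemma isDirectedCycleDigraph_of_subsingleton_setOf_adj_to [Fintype V] [Nontrivial V]
    {A : V → V → Prop} (hs : StrongConn A) (hin : ∀ v, {u | A u v}.Subsingleton) :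
    IsDirectedCycleDigraph A := by
  choose p hp using hs.exists_adj_to
  have hp_unique : ∀ u v, A u v ↔ p v = u :=
    fun u v => ⟨fun huv => hin v (hp v) huv, fun h => h ▸ hp v⟩
  have hsurj : Function.Surjective p := fun u =>
    (hs.exists_adj_from u).imp fun v huv => (hp_unique u v).mp huv
  let π := Equiv.ofBijective p ⟨Finite.injective_iff_surjective.mpr hsurj, hsurj⟩
  refine isDirectedCycleDigraph_of_perm π.symm (fun u v => ?_) hs (Classical.arbitrary V)
  rw [hp_unique, Equiv.symm_apply_eq, eq_comm]
  rfl

lemma hasCycleLen_four {A : V → V → Prop} (hirr : ∀ v, ¬ A v v) {u y x y' : V}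
    (h₁ : A u y) (h₂ : A y x) (h₃ : A x y') (h₄ : A y' u) (hux : u ≠ x) (hyy' : y ≠ y') :
    HasCycleLen A 4 := by
  have hne : ∀ {v w}, A v w → v ≠ w := fun hvw h => hirr _ (h ▸ hvw)
  refine ⟨![u, y, x, y'], ?_, ?_⟩
  · intro i j hij
    fin_cases i <;> fin_cases j <;>
      first | rfl | simp_all [hne h₁, hne h₂, hne h₃, hne h₄, Ne.symm]
  · intro i
    fin_cases i <;> assumption

namespace IsBipartition

variable {A : V → V → Prop} {P Q : Set V}

lemma symm (h : IsBipartition A P Q) : IsBipartition A Q P :=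
  ⟨h.1.symm, Set.union_comm P Q ▸ h.2.1, fun u v huv => (h.2.2 u v huv).symm⟩

lemma mem_or_mem (h : IsBipartition A P Q) (v : V) : v ∈ P ∨ v ∈ Q := by
  simp [← Set.mem_union, h.2.1]

lemma not_adj (h : IsBipartition A P Q) {u v : V} (hu : u ∈ P) (hv : v ∈ P) : ¬ A u v :=
  fun huv => (h.2.2 u v huv).elim (fun hPQ => h.1.notMem_of_mem_left hv hPQ.2)
    (fun hQP => h.1.notMem_of_mem_left hu hQP.1)

lemma irrefl (h : IsBipartition A P Q) (v : V) : ¬ A v v :=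
  (h.mem_or_mem v).elim (fun hv => h.not_adj hv hv) (fun hv => h.symm.not_adj hv hv)

lemma mem_of_adj_from (h : IsBipartition A P Q) {u v : V} (huv : A u v) (hu : u ∈ P) : v ∈ Q :=
  (h.mem_or_mem v).resolve_left fun hv => h.not_adj hu hv huv

lemma mem_of_adj_to (h : IsBipartition A P Q) {u v : V} (huv : A u v) (hv : v ∈ P) : u ∈ Q :=
  (h.mem_or_mem u).resolve_left fun hu => h.not_adj hu hv huv

variable [Finite V]

lemma ncard_setOf_adj_from_le (h : IsBipartition A P Q) {v : V} (hv : v ∈ P) :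
    {w | A v w}.ncard ≤ Q.ncard :=
  Set.ncard_le_ncard fun _ hw => h.mem_of_adj_from hw hv

lemma ncard_setOf_adj_to_le (h : IsBipartition A P Q) {v : V} (hv : v ∈ P) :
    {w | A w v}.ncard ≤ Q.ncard :=
  Set.ncard_le_ncard fun _ hw => h.mem_of_adj_to hw hv

lemma adj_from_of_le_ncard (h : IsBipartition A P Q) {v : V} (hv : v ∈ P)
    (hcard : Q.ncard ≤ {w | A v w}.ncard) : ∀ w ∈ Q, A v w := fun w hw => by
  rwa [← Set.eq_of_subset_of_ncard_le (fun _ hw => h.mem_of_adj_from hw hv) hcard] at hw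

lemma adj_to_of_le_ncard (h : IsBipartition A P Q) {v : V} (hv : v ∈ P)
    (hcard : Q.ncard ≤ {w | A w v}.ncard) : ∀ w ∈ Q, A w v := fun w hw => by
  rwa [← Set.eq_of_subset_of_ncard_le (fun _ hw => h.mem_of_adj_to hw hv) hcard] at hw

lemma ncard_add_ncard_le (h : IsBipartition A P Q) {u w : V} (hu : u ∈ P) (hw : w ∈ P) :
    {y | A u y}.ncard + {y | A y w}.ncard ≤ Q.ncard + ({y | A u y} ∩ {y | A y w}).ncard := by
  rw [← Set.ncard_union_add_ncard_inter]
  gcongr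
  · exact Set.toFinite Q
  exact Set.union_subset (fun _ hy => h.mem_of_adj_from hy hu) (fun _ hy => h.mem_of_adj_to hy hw)

end IsBipartition

section FourCycles

variable {A : V → V → Prop} {P Q : Set V}

lemma hasCycleLen_four_of_one_lt_ncard_inter (hirr : ∀ v, ¬ A v v) {u w : V} (huw : u ≠ w)
    (h₁ : 1 < ({y | A u y} ∩ {y | A y w}).ncard)
    (h₂ : ({y | A w y} ∩ {y | A y u}).Nonempty) : HasCycleLen A 4 := by
  obtain ⟨y', hwy', hy'u⟩ := h₂
  obtain ⟨y, ⟨huy, hyw⟩, hyy'⟩ := Set.exists_ne_of_one_lt_ncard h₁ y'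
  exact hasCycleLen_four hirr huy hyw hwy' hy'u huw hyy'

/-- A walk `u → y → x` with `x ≠ u` closes into a 4-cycle `u y x z` as soon as `x` has an
out-neighbour `z ≠ y`. The vertices reached from `u` without such a continuation form a set that
misses `w`, so some arc leaves it. -/
lemma hasCycleLen_four_of_adj_to_of_adj_from [Finite V] (hbip : IsBipartition A P Q)
    (hs : StrongConn A) (hQ : 1 < Q.ncard) {u w : V} (hu : u ∈ P) (hw : w ∈ P) (huw : u ≠ w)
    (hQu : ∀ y ∈ Q, A y u) (hwQ : ∀ y ∈ Q, A w y) : HasCycleLen A 4 := by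
  let S : Set V := {v | v = u ∨ A u v ∨ ∃ y, A u y ∧ A y v ∧ ∀ z, A v z → z = y}
  have hwS : w ∉ S := by
    obtain ⟨z₁, z₂, hz₁, hz₂, hz⟩ := (Set.one_lt_ncard_iff).mp hQ
    rintro (rfl | huw' | ⟨y, -, -, hy⟩)
    · exact huw rfl
    · exact hbip.not_adj hu hw huw'
    · exact hz ((hy z₁ (hwQ z₁ hz₁)).trans (hy z₂ (hwQ z₂ hz₂)).symm)
  obtain ⟨v, t, hvS, htS, hvt⟩ := hs.exists_adj_mem_notMem (Or.inl rfl : u ∈ S) hwS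
  rcases hvS with rfl | huv | ⟨y, huy, -, hy⟩
  · exact (htS (Or.inr (Or.inl hvt))).elim
  · simp only [S, Set.mem_ofPred_eq, not_or, not_exists, not_and, not_forall] at htS
    obtain ⟨htu, -, hcont⟩ := htS
    obtain ⟨z, htz, hzv⟩ := hcont v huv hvt
    have hzQ : z ∈ Q := hbip.mem_of_adj_from htz
      (hbip.symm.mem_of_adj_from hvt (hbip.mem_of_adj_from huv hu))
    exact hasCycleLen_four hbip.irrefl huv hvt htz (hQu z hzQ) (Ne.symm htu) (Ne.symm hzv)
  · exact (htS (Or.inr (Or.inl ((hy t hvt) ▸ huy)))).elim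

lemma hasCycleLen_four_of_adj_into_hub (hbip : IsBipartition A P Q) {u y x t : V} (hu : u ∈ P)
    (huQ : ∀ z ∈ Q, A u z) (hyP : ∀ z ∈ P, A y z) (hy : y ∈ Q) (hxt : A x t) (htu : A t u)
    (hxy : ¬ A x y) : HasCycleLen A 4 := by
  have htQ : t ∈ Q := hbip.mem_of_adj_to htu hu
  have hxP : x ∈ P := hbip.symm.mem_of_adj_to hxt htQ
  refine hasCycleLen_four hbip.irrefl (huQ y hy) (hyP x hxP) hxt htu ?_ ?_
  · rintro rfl
    exact hxy (huQ y hy)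
  · rintro rfl
    exact hxy hxt

/-- Some arc leaves the set of vertices sending no arc into `{u, y}`; it closes a 4-cycle through
one of the hubs. -/
lemma hasCycleLen_four_of_hubs (hbip : IsBipartition A P Q) (hs : StrongConn A) {u y v : V}
    (hu : u ∈ P) (hy : y ∈ Q) (huQ : ∀ z ∈ Q, A u z) (hyP : ∀ z ∈ P, A y z) (hv : v ∈ P)
    (hvy : ¬ A v y) : HasCycleLen A 4 := by
  let S : Set V := {x | ¬ A x u ∧ ¬ A x y}
  obtain ⟨x, t, ⟨hxu, hxy⟩, htS, hxt⟩ := hs.exists_adj_mem_notMem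
    (⟨hbip.not_adj hv hu, hvy⟩ : v ∈ S) (fun huS : u ∈ S => huS.2 (huQ y hy))
  rcases not_and_or.mp htS with htu | hty
  · exact hasCycleLen_four_of_adj_into_hub hbip hu huQ hyP hy hxt (not_not.mp htu) hxy
  · exact hasCycleLen_four_of_adj_into_hub hbip.symm hy hyP huQ hu hxt (not_not.mp hty) hxu

end FourCycles

lemma ncard_setOf_adj_to_le_two [Finite V] {A : V → V → Prop} {z b : V}
    (hdom : ∀ x x', x ≠ x' → A x z → A x' z → x = b ∨ x' = b) : {x | A x z}.ncard ≤ 2 := by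
  have hsub : ({x | A x z} \ {b}).ncard ≤ 1 := (Set.ncard_le_one).mpr fun x hx x' hx' =>
    by_contra fun hxx' => (hdom x x' hxx' hx.1 hx'.1).elim hx.2 hx'.2
  have := Set.ncard_le_ncard_sdiff_add_ncard {x | A x z} {b}
  rw [Set.ncard_singleton] at this
  omega

section BigVertices

variable [Finite V] {A : V → V → Prop} {P Q : Set V} {a : ℕ}

lemma hasCycleLen_four_of_two_big (hbip : IsBipartition A P Q) (ha : 4 ≤ a) (hQ : Q.ncard = a)
    (hs : StrongConn A) {u w : V} (hu : u ∈ P) (hw : w ∈ P) (huw : u ≠ w)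
    (hub : 2 * a - 2 ≤ deg A u) (hwb : 2 * a - 2 ≤ deg A w) : HasCycleLen A 4 := by
  have huw₁ := hbip.ncard_add_ncard_le hu hw
  have hwu₁ := hbip.ncard_add_ncard_le hw hu
  have := hbip.ncard_setOf_adj_from_le hu
  have := hbip.ncard_setOf_adj_from_le hw
  have := hbip.ncard_setOf_adj_to_le hu
  have := hbip.ncard_setOf_adj_to_le hw
  unfold deg at hub hwb
  by_cases e₁ : {y | A u y} ∩ {y | A y w} = ∅
  · rw [e₁, Set.ncard_empty] at huw₁
    exact hasCycleLen_four_of_adj_to_of_adj_from hbip hs (by omega) hu hw huw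
      (hbip.adj_to_of_le_ncard hu (by omega)) (hbip.adj_from_of_le_ncard hw (by omega))
  by_cases e₂ : {y | A w y} ∩ {y | A y u} = ∅
  · rw [e₂, Set.ncard_empty] at hwu₁
    exact hasCycleLen_four_of_adj_to_of_adj_from hbip hs (by omega) hw hu huw.symm
      (hbip.adj_to_of_le_ncard hw (by omega)) (hbip.adj_from_of_le_ncard hu (by omega))
  replace e₁ := Set.nonempty_iff_ne_empty.mpr e₁
  replace e₂ := Set.nonempty_iff_ne_empty.mpr e₂
  have := (Set.ncard_pos (Set.toFinite _)).mpr e₁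
  have := (Set.ncard_pos (Set.toFinite _)).mpr e₂
  rcases (by omega : 1 < ({y | A u y} ∩ {y | A y w}).ncard ∨
      1 < ({y | A w y} ∩ {y | A y u}).ncard) with h | h
  · exact hasCycleLen_four_of_one_lt_ncard_inter hbip.irrefl huw h e₂
  · exact hasCycleLen_four_of_one_lt_ncard_inter hbip.irrefl huw.symm h e₁

lemma ncard_setOf_adj_to_le_two_of_unique_big (hbip : IsBipartition A P Q)
    (hdeg : ∀ x y : V, DomPair A x y → 2 * a - 2 ≤ max (deg A x) (deg A y)) {y : V}
    (hbig : ∀ y' ∈ Q, y' ≠ y → deg A y' < 2 * a - 2) {z : V} (hz : z ∈ P) :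
    {x | A x z}.ncard ≤ 2 := by
  refine ncard_setOf_adj_to_le_two (b := y) fun x x' hxx' hx hx' => ?_
  by_contra! hne
  rcases le_max_iff.mp (hdeg x x' ⟨hxx', z, hx, hx'⟩) with h | h
  · exact (hbig x (hbip.mem_of_adj_to hx hz) hne.1).not_ge h
  · exact (hbig x' (hbip.mem_of_adj_to hx' hz) hne.2).not_ge h

lemma hasCycleLen_four_of_big (hbip : IsBipartition A P Q) (ha : 4 ≤ a) (hP : P.ncard = a)
    (hQ : Q.ncard = a) (hs : StrongConn A)
    (hdeg : ∀ x y : V, DomPair A x y → 2 * a - 2 ≤ max (deg A x) (deg A y)) {u : V} (hu : u ∈ P)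
    (hub : 2 * a - 2 ≤ deg A u) : HasCycleLen A 4 := by
  by_cases hPbig : ∃ u' ∈ P, u' ≠ u ∧ 2 * a - 2 ≤ deg A u'
  · obtain ⟨u', hu', hne, hu'b⟩ := hPbig
    exact hasCycleLen_four_of_two_big hbip ha hQ hs hu hu' hne.symm hub hu'b
  have hout := hbip.ncard_setOf_adj_from_le hu
  obtain ⟨y, hy, hyb⟩ : ∃ y ∈ Q, 2 * a - 2 ≤ deg A y := by
    obtain ⟨c, d, hc, hd, hcd⟩ := (Set.one_lt_ncard_iff).mp
      (by unfold deg at hub; omega : 1 < {x | A x u}.ncard)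
    rcases le_max_iff.mp (hdeg c d ⟨hcd, u, hc, hd⟩) with h | h
    · exact ⟨c, hbip.mem_of_adj_to hc hu, h⟩
    · exact ⟨d, hbip.mem_of_adj_to hd hu, h⟩
  by_cases hQbig : ∃ y' ∈ Q, y' ≠ y ∧ 2 * a - 2 ≤ deg A y'
  · obtain ⟨y', hy', hne, hy'b⟩ := hQbig
    exact hasCycleLen_four_of_two_big hbip.symm ha hP hs hy hy' hne.symm hyb hy'b
  push Not at hPbig hQbig
  have hinu := ncard_setOf_adj_to_le_two_of_unique_big hbip hdeg hQbig hu
  have hiny := ncard_setOf_adj_to_le_two_of_unique_big hbip.symm hdeg hPbig hy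
  unfold deg at hub hyb
  have huQ := hbip.adj_from_of_le_ncard hu (by omega)
  have hyP := hbip.symm.adj_from_of_le_ncard hy (by omega)
  obtain ⟨v, hv, hvy⟩ : ∃ v ∈ P, ¬ A v y := by
    by_contra! hPy
    have := Set.ncard_le_ncard (s := P) (t := {x | A x y}) hPy
    omega
  exact hasCycleLen_four_of_hubs hbip hs hu hy huQ hyP hv hvy

end BigVertices

/-- If `D` is a strongly connected balanced bipartite digraph of order `2a ≥ 8` which is
not a directed cycle and `max {d(x), d(y)} ≥ 2a − 2` for every dominating pair, then `D`
contains a non-hamiltonian directed cycle of length at least 4. -/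
theorem stmt4 [Fintype V] (A : V → V → Prop) (X Y : Set V) (a : ℕ) (ha : 4 ≤ a)
    (hX : X.ncard = a) (hY : Y.ncard = a) (hbip : IsBipartition A X Y)
    (hstrong : StrongConn A)
    (hnotcyc : ¬ IsDirectedCycleDigraph A)
    (hdeg : ∀ x y : V, DomPair A x y → 2 * a - 2 ≤ max (deg A x) (deg A y)) :
    ∃ m : ℕ, 4 ≤ m ∧ m < 2 * a ∧ HasCycleLen A m := by
  by_cases hdom : ∃ x y, DomPair A x y
  · obtain ⟨x, y, hxy⟩ := hdom
    obtain ⟨v, hv⟩ : ∃ v, 2 * a - 2 ≤ deg A v :=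
      (le_max_iff.mp (hdeg x y hxy)).elim (⟨x, ·⟩) (⟨y, ·⟩)
    refine ⟨4, le_rfl, by omega, ?_⟩
    rcases hbip.mem_or_mem v with hvX | hvY
    · exact hasCycleLen_four_of_big hbip ha hX hY hstrong hdeg hvX hv
    · exact hasCycleLen_four_of_big hbip.symm ha hY hX hstrong hdeg hvY hv
  · push Not at hdom
    obtain ⟨x, x', -, -, hxx'⟩ := (Set.one_lt_ncard_iff).mp (by omega : 1 < X.ncard)
    have : Nontrivial V := ⟨x, x', hxx'⟩
    have hin : ∀ v, {u | A u v}.Subsingleton := fun v u hu u' hu' =>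
      by_contra fun hne => hdom u u' ⟨hne, v, hu, hu'⟩
    exact absurd (isDirectedCycleDigraph_of_subsingleton_setOf_adj_to hstrong hin) hnotcyc
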